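/- Let $n \ge 1$, $a \ge 1$, $b \ge 1$ and let $H$ be the $n \times n$ matrix with diagonal entries $a + (n-1)b$ and off-diagonal entries $b$ (the truncated signless Laplacian of the complete multigraph $K_{n+1}^{a,b}$). Let $J_H \subseteq R = K[x_1,\ldots,x_n]$ be the ideal generated by $x_t^{a+(n-1)b}$ for all $t$ and $x_i^{a+(n-2)b} x_j^{a+(n-2)b}$ for all $i < j$. Then $\dim_K(R/J_H) = \det H = (a+(n-2)b)^{n-1}(a+2(n-1)b)$. -/

import Mathlib

/-!
`J_H` is a monomial ideal, so the classes of the standard monomials (those divisible by no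
generator) form a `K`-basis of `R ⧸ J_H`. With `D = a + (n-1)b` and `d = a + (n-2)b`, a monomial
is standard iff every exponent is `< D` and at most one exponent is `≥ d`; there are
`d^n + n (D - d) d^(n-1)` of them. On the other side `H = (D - b) I + b 𝟙 𝟙ᵀ` is a rank-one
perturbation of a scalar matrix, whose determinant `(D - b)^(n-1) (D - b + n b)` comes from
`charpoly (u vᵀ) = X^(n-1) (X - vᵀ u)`. Both expressions equal `d^(n-1) (a + 2(n-1)b)`.
-/

open MvPolynomial Finset

namespace Matrix

variable {m R : Type*} [Fintype m] [DecidableEq m] [CommRing R]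

theorem det_scalar_sub_replicateCol_mul_replicateRow (t : R) (u v : m → R)
    (hm : 1 ≤ Fintype.card m) :
    (scalar m t - replicateCol Unit u * replicateRow Unit v).det =
      t ^ (Fintype.card m - 1) * (t - v ⬝ᵥ u) := by
  rw [← eval_charpoly, charpoly_mul_comm_of_le _ _ (by simpa using hm), Polynomial.eval_mul,
    Polynomial.eval_pow, Polynomial.eval_X, eval_charpoly, det_unique]
  simp [dotProduct]

theorem det_of_ite_eq (x y : R) (hm : 1 ≤ Fintype.card m) :
    (of fun i j : m => if i = j then x else y).det =
      (x - y) ^ (Fintype.card m - 1) * (x - y + Fintype.card m * y) := by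
  have hM : (of fun i j : m => if i = j then x else y) =
      scalar m (x - y) -
        replicateCol Unit (fun _ : m => -y) * replicateRow Unit (fun _ : m => (1 : R)) := by
    ext i j
    by_cases h : i = j <;> simp [h, mul_apply]
  rw [hM, det_scalar_sub_replicateCol_mul_replicateRow _ _ _ hm]
  simp [dotProduct]

end Matrix

theorem Finsupp.single_add_single_le_iff {σ : Type*} {i j : σ} (hij : i ≠ j) {d e : ℕ}
    {m : σ →₀ ℕ} : single i d + single j e ≤ m ↔ d ≤ m i ∧ e ≤ m j := by
  refine ⟨fun h => ⟨by simpa [hij] using h i, by simpa [hij.symm] using h j⟩,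
    fun ⟨hi, hj⟩ k => ?_⟩
  by_cases hki : k = i
  · subst hki; simpa [hij] using hi
  · by_cases hkj : k = j
    · subst hkj; simpa [hki] using hj
    · simp [Ne.symm hki, Ne.symm hkj]

theorem card_fun_lt_with_subsingleton_ge {ι : Type*} [Fintype ι] [DecidableEq ι] {d D : ℕ}
    (hdD : d ≤ D) :
    Nat.card {f : ι → ℕ // (∀ i, f i < D) ∧ ∀ i j, d ≤ f i → d ≤ f j → i = j} =
      d ^ Fintype.card ι + Fintype.card ι * (D - d) * d ^ (Fintype.card ι - 1) := by
  let small : Finset (ι → ℕ) := Fintype.piFinset fun _ => range d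
  let large (i : ι) : Finset (ι → ℕ) :=
    Fintype.piFinset (Function.update (fun _ => range d) i (Ico d D))
  have mem_large {f : ι → ℕ} {i : ι} :
      f ∈ large i ↔ (d ≤ f i ∧ f i < D) ∧ ∀ j ≠ i, f j < d := by
    simp only [large, Fintype.mem_piFinset, Function.update_apply]
    refine ⟨fun h => ⟨by simpa using h i, fun j hj => by simpa [hj] using h j⟩,
      fun ⟨hi, hj⟩ j => ?_⟩
    by_cases hji : j = i
    · subst hji; simpa using hi
    · simpa [hji] using hj j hji
  have hmem (f : ι → ℕ) : ((∀ i, f i < D) ∧ ∀ i j, d ≤ f i → d ≤ f j → i = j) ↔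
      f ∈ small ∪ univ.biUnion large := by
    simp only [mem_union, mem_biUnion, mem_univ, true_and, mem_large, small,
      Fintype.mem_piFinset, mem_range]
    constructor
    · rintro ⟨hD, hone⟩
      by_cases h : ∃ i, d ≤ f i
      · obtain ⟨i, hi⟩ := h
        exact Or.inr ⟨i, ⟨hi, hD i⟩, fun j hj =>
          not_le.mp fun hdj => hj (hone j i hdj hi)⟩
      · push Not at h
        exact Or.inl h
    · rintro (h | ⟨i, ⟨hi, hiD⟩, hj⟩)
      · exact ⟨fun i => (h i).trans_le hdD, fun i _ hi => absurd hi (h i).not_ge⟩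
      · have hbig (j : ι) (hdj : d ≤ f j) : j = i := by_contra fun hji => (hj j hji).not_ge hdj
        refine ⟨fun j => ?_, fun j k hj hk => (hbig j hj).trans (hbig k hk).symm⟩
        by_cases hji : j = i
        · exact hji ▸ hiD
        · exact (hj j hji).trans_le hdD
  have hdisj : Disjoint small (univ.biUnion large) := by
    refine (disjoint_biUnion_right _ _ _).mpr fun i _ => disjoint_left.mpr fun f hs hl => ?_
    exact (mem_large.mp hl).1.1.not_gt (mem_range.mp (Fintype.mem_piFinset.mp hs i))
  have hpair : Set.PairwiseDisjoint (univ : Finset ι) large := by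
    intro i _ j _ hij
    refine disjoint_left.mpr fun f hi hj => ?_
    exact ((mem_large.mp hj).2 i hij).not_ge (mem_large.mp hi).1.1
  have hlarge (i : ι) : ∏ j, #(Function.update (fun _ => range d) i (Ico d D) j) =
      (D - d) * d ^ (Fintype.card ι - 1) := by
    simp only [Function.apply_update (fun _ s => #s), card_range, Nat.card_Ico,
      prod_update_of_mem (mem_univ i), prod_const, card_sdiff_of_subset (subset_univ _),
      card_singleton, card_univ]
  rw [Nat.card_congr (Equiv.subtypeEquivRight hmem), Nat.card_eq_finsetCard,
    card_union_of_disjoint hdisj, card_biUnion hpair]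
  simp only [small, large, Fintype.card_piFinset, prod_const, card_range, card_univ, hlarge,
    sum_const, smul_eq_mul, mul_assoc]

namespace MvPolynomial

variable {σ : Type*}

theorem isCompl_restrictSupport_compl {R : Type*} [CommSemiring R] (s : Set (σ →₀ ℕ)) :
    IsCompl (restrictSupport R s) (restrictSupport R sᶜ) := by
  have h : IsCompl (Finsupp.supported R R s) (Finsupp.supported R R sᶜ) :=
    ⟨Finsupp.disjoint_supported_supported disjoint_compl_right, by
      rw [codisjoint_iff, ← Finsupp.supported_union, Set.union_compl_self,
        Finsupp.supported_univ]⟩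
  exact (Submodule.orderIsoMapComap (AddMonoidAlgebra.coeffLinearEquiv R)).symm.isCompl h

theorem restrictScalars_span_monomial_image {R : Type*} [CommSemiring R] (S : Set (σ →₀ ℕ)) :
    (Ideal.span ((monomial · (1 : R)) '' S)).restrictScalars R =
      restrictSupport R {m | ∃ s ∈ S, s ≤ m} :=
  Submodule.ext fun _ => mem_ideal_span_monomial_image

theorem finrank_quotient_span_monomial_image (K : Type*) [Field K] (S : Set (σ →₀ ℕ)) :
    Module.finrank K (MvPolynomial σ K ⧸ Ideal.span ((monomial · (1 : K)) '' S)) =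
      Nat.card {m : σ →₀ ℕ // ∀ s ∈ S, ¬ s ≤ m} := by
  let U : Set (σ →₀ ℕ) := {m | ∃ s ∈ S, s ≤ m}
  rw [← (Submodule.Quotient.restrictScalarsEquiv K _).finrank_eq,
    restrictScalars_span_monomial_image,
    (Submodule.quotientEquivOfIsCompl _ _ (isCompl_restrictSupport_compl U)).finrank_eq,
    Module.finrank_eq_nat_card_basis (basisRestrictSupport K Uᶜ)]
  exact Nat.card_congr (Equiv.subtypeEquivRight fun m => by simp [U])

variable [LinearOrder σ]

/-- For `σ = Fin n`, `D = a + (n-1)b` and `d = a + (n-2)b` this is the 1-skeleton ideal `J_H`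
of `K_{n+1}^{a,b}`. -/
noncomputable def completeSkeletonIdeal (K : Type*) [CommSemiring K] (D d : ℕ) : Ideal (MvPolynomial σ K) :=
  Ideal.span ((Set.range fun t => (X t : MvPolynomial σ K) ^ D) ∪
    {m | ∃ i j : σ, i < j ∧ m = X i ^ d * X j ^ d})

def completeSkeletonExponents (D d : ℕ) : Set (σ →₀ ℕ) :=
  Set.range (fun t => Finsupp.single t D) ∪
    {s | ∃ i j : σ, i < j ∧ s = Finsupp.single i d + Finsupp.single j d}

theorem completeSkeletonIdeal_eq_span_monomial (K : Type*) [CommSemiring K] (D d : ℕ) :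
    completeSkeletonIdeal (σ := σ) K D d =
      Ideal.span ((monomial · (1 : K)) '' completeSkeletonExponents D d) := by
  rw [completeSkeletonIdeal, completeSkeletonExponents, Set.image_union, ← Set.range_comp]
  congr 2
  · simp only [Function.comp_def, X_pow_eq_monomial]
  · ext p
    simp only [Set.mem_ofPred_eq, Set.mem_image, X_pow_eq_monomial, monomial_mul, one_mul]
    constructor
    · rintro ⟨i, j, hij, rfl⟩
      exact ⟨_, ⟨i, j, hij, rfl⟩, rfl⟩
    · rintro ⟨_, ⟨i, j, hij, rfl⟩, rfl⟩
      exact ⟨i, j, hij, rfl⟩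

theorem forall_mem_completeSkeletonExponents_not_le_iff {D d : ℕ} {m : σ →₀ ℕ} :
    (∀ s ∈ completeSkeletonExponents D d, ¬ s ≤ m) ↔
      (∀ i, m i < D) ∧ ∀ i j, d ≤ m i → d ≤ m j → i = j := by
  simp only [completeSkeletonExponents, Set.mem_union, Set.mem_range, Set.mem_ofPred_eq]
  constructor
  · intro h
    refine ⟨fun i => not_le.mp fun hi => h _ (Or.inl ⟨i, rfl⟩) (Finsupp.single_le_iff.mpr hi),
      fun i j hi hj => by_contra fun hij => ?_⟩
    rcases lt_or_gt_of_ne hij with hlt | hlt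
    · exact h _ (Or.inr ⟨i, j, hlt, rfl⟩) ((Finsupp.single_add_single_le_iff hij).mpr ⟨hi, hj⟩)
    · exact h _ (Or.inr ⟨j, i, hlt, rfl⟩)
        ((Finsupp.single_add_single_le_iff hlt.ne).mpr ⟨hj, hi⟩)
  · rintro ⟨hD, hone⟩ s (⟨t, rfl⟩ | ⟨i, j, hij, rfl⟩) hs
    · exact (hD t).not_ge (Finsupp.single_le_iff.mp hs)
    · obtain ⟨hi, hj⟩ := (Finsupp.single_add_single_le_iff hij.ne).mp hs
      exact hij.ne (hone i j hi hj)

theorem finrank_quotient_completeSkeletonIdeal [Fintype σ] (K : Type*) [Field K] {D d : ℕ}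
    (hdD : d ≤ D) :
    Module.finrank K (MvPolynomial σ K ⧸ completeSkeletonIdeal K D d) =
      d ^ Fintype.card σ + Fintype.card σ * (D - d) * d ^ (Fintype.card σ - 1) := by
  rw [completeSkeletonIdeal_eq_span_monomial, finrank_quotient_span_monomial_image,
    Nat.card_congr (Equiv.subtypeEquivRight fun _ =>
      forall_mem_completeSkeletonExponents_not_le_iff),
    ← card_fun_lt_with_subsingleton_ge hdD]
  exact Nat.card_congr (Finsupp.equivFunOnFinite.subtypeEquiv fun _ => Iff.rfl)

end MvPolynomial

theorem stmt15_general (K : Type*) [Field K] (n a b : ℕ) (hn : 1 ≤ n)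
    (H : Matrix (Fin n) (Fin n) ℤ)
    (hH : ∀ i j, H i j = if i = j then ((a + (n - 1) * b : ℕ) : ℤ) else (b : ℤ))
    (J : Ideal (MvPolynomial (Fin n) K))
    (hJ : J = Ideal.span
      ((Set.range fun t => (X t : MvPolynomial (Fin n) K) ^ (a + (n - 1) * b)) ∪
        {m | ∃ i j : Fin n, i < j ∧
          m = X i ^ (a + (n - 2) * b) * X j ^ (a + (n - 2) * b)})) :
    (Module.finrank K (MvPolynomial (Fin n) K ⧸ J) : ℤ) = H.det ∧
      H.det = ((a + (n - 2) * b : ℕ) : ℤ) ^ (n - 1) * ((a + 2 * (n - 1) * b : ℕ) : ℤ) := by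
  have hdD : a + (n - 2) * b ≤ a + (n - 1) * b := by gcongr; omega
  have hdet := (Matrix.ext hH : H = Matrix.of _) ▸ Matrix.det_of_ite_eq (m := Fin n)
    ((a + (n - 1) * b : ℕ) : ℤ) b (by simpa using hn)
  rw [show J = completeSkeletonIdeal K _ _ from hJ, finrank_quotient_completeSkeletonIdeal K hdD,
    hdet, Fintype.card_fin]
  obtain rfl | ⟨m, rfl⟩ : n = 1 ∨ ∃ m, n = m + 2 := by
    rcases n with _ | _ | m <;> simp_all
  · simp
  · have hD : a + (m + 1) * b = a + m * b + b := by ring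
    simp only [Nat.add_sub_cancel, Nat.add_succ_sub_one, hD, Nat.add_sub_cancel_left]
    push_cast
    constructor <;> ring

theorem stmt15 (K : Type*) [Field K] (n a b : ℕ) (hn : 1 ≤ n) (ha : 1 ≤ a) (hb : 1 ≤ b)
    (H : Matrix (Fin n) (Fin n) ℤ)
    (hH : ∀ i j, H i j = if i = j then ((a + (n - 1) * b : ℕ) : ℤ) else (b : ℤ))
    (J : Ideal (MvPolynomial (Fin n) K))
    (hJ : J = Ideal.span
      ((Set.range fun t => (X t : MvPolynomial (Fin n) K) ^ (a + (n - 1) * b)) ∪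
        {m | ∃ i j : Fin n, i < j ∧
          m = X i ^ (a + (n - 2) * b) * X j ^ (a + (n - 2) * b)})) :
    (Module.finrank K (MvPolynomial (Fin n) K ⧸ J) : ℤ) = H.det ∧
      H.det = ((a + (n - 2) * b : ℕ) : ℤ) ^ (n - 1) * ((a + 2 * (n - 1) * b : ℕ) : ℤ) :=
  stmt15_general K n a b hn H hH J hJ
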